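/- arXiv:1504.02602 — 5 statements merged into one kernel-verified Lean document; each statement's English description precedes it below -/
import Mathlib

section
/- Let g, h ∈ ℝ^n be vectors with all finite entries and g ≤ h componentwise. Then a vector x ∈ ℝ^n satisfies α + g ≤ x ≤ α + h (componentwise, for some real α) if and only if there exists u ∈ ℝ^n such that x_i = max(u_i, max_j (g_i - h_j + u_j)) for all i. -/
/-!
If `α + g ≤ x ≤ α + h`, then `g i - h j + x j ≤ g i + α ≤ x i` for all `i, j`, so the
max-plus term `(g h⁻) x` is dominated by `x` and `x = (I ⊕ g h⁻) x`. Conversely, writing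
`α = max_j (u j - h j)`, one has `((g h⁻) u) i = g i + α`, hence
`((I ⊕ g h⁻) u) i = max (u i) (g i + α)`, which lies between `α + g i` and `α + h i`
because `u i ≤ α + h i` and `g ≤ h`.
-/

open Finset

section

variable {ι G : Type*} [Fintype ι] [AddCommGroup G] [LinearOrder G] [IsOrderedAddMonoid G]

/-- The max-plus product `(I ⊕ g h⁻) u`, where `(g h⁻) i j = g i - h j`. -/
def maxPlusOneAddOuter (g h : ι → G) (hι : (univ : Finset ι).Nonempty) (u : ι → G) : ι → G :=
  fun i => max (u i) (univ.sup' hι fun j => g i - h j + u j)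

theorem maxPlusOneAddOuter_eq_self {g h x : ι → G} (hι : (univ : Finset ι).Nonempty) {α : G}
    (hα : ∀ i, α + g i ≤ x i ∧ x i ≤ α + h i) : maxPlusOneAddOuter g h hι x = x := by
  funext i
  refine max_eq_left (sup'_le _ _ fun j _ => ?_)
  calc g i - h j + x j ≤ g i - h j + (α + h j) := add_le_add_right (hα j).2 _
    _ = α + g i := by abel
    _ ≤ x i := (hα i).1

theorem sup'_sub_add_eq_add_sup'_sub (g h u : ι → G) (hι : (univ : Finset ι).Nonempty) (i : ι) :
    (univ.sup' hι fun j => g i - h j + u j) = g i + univ.sup' hι fun j => u j - h j := by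
  rw [add_sup']
  congr 1
  funext j
  abel

theorem exists_bounds_maxPlusOneAddOuter {g h : ι → G} (hgh : ∀ i, g i ≤ h i)
    (hι : (univ : Finset ι).Nonempty) (u : ι → G) :
    ∃ α : G, ∀ i, α + g i ≤ maxPlusOneAddOuter g h hι u i ∧
      maxPlusOneAddOuter g h hι u i ≤ α + h i := by
  refine ⟨univ.sup' hι fun j => u j - h j, fun i => ?_⟩
  have hu : u i ≤ (univ.sup' hι fun j => u j - h j) + h i :=
    sub_le_iff_le_add.mp (le_sup' (fun j => u j - h j) (mem_univ i))
  rw [maxPlusOneAddOuter, sup'_sub_add_eq_add_sup'_sub, add_comm (g i)]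
  exact ⟨le_max_right _ _, max_le hu (add_le_add_right (hgh i) _)⟩

end

/-- Representation lemma in max-plus: for finite vectors `g ≤ h`, a vector `x` satisfies
`α + g ≤ x ≤ α + h` for some real `α` iff `x = (I ⊕ g h⁻) u` for some regular `u`, i.e.
`x i = max (u i) (max_j (g i - h j + u j))`. -/
theorem maxplus_representation_lemma (n : ℕ) (hn : 0 < n) (g h : Fin n → ℝ)
    (hgh : ∀ i, g i ≤ h i) (x : Fin n → ℝ) :
    (∃ α : ℝ, ∀ i, α + g i ≤ x i ∧ x i ≤ α + h i) ↔
      (∃ u : Fin n → ℝ, ∀ i, x i =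
        max (u i) (Finset.univ.sup'
          (by simpa [Finset.univ_nonempty_iff] using Fin.pos_iff_nonempty.mp hn)
          (fun j => g i - h j + u j))) := by
  have hι : (univ : Finset (Fin n)).Nonempty := univ_nonempty_iff.mpr (Fin.pos_iff_nonempty.mp hn)
  constructor
  · rintro ⟨α, hα⟩
    exact ⟨x, fun i => (congrFun (maxPlusOneAddOuter_eq_self hι hα) i).symm⟩
  · rintro ⟨u, hu⟩
    obtain rfl : x = maxPlusOneAddOuter g h hι u := funext hu
    exact exists_bounds_maxPlusOneAddOuter hgh hι u
end

section
/- Let A be an m×n matrix over ℝ ∪ {-∞} with each row containing at least one finite entry, p ∈ (ℝ ∪ {-∞})^m a vector with at least one finite entry, and q ∈ ℝ^n a vector with all finite entries. Then for every vector x ∈ ℝ^n, the quantity max_j(x_j - q_j) + max_i(p_i - max_j(a_{ij} + x_j)) is at least Δ = max_i (p_i - max_j (a_{ij} + q_j)). -/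
/-- The max-plus objective `q⁻ x (A x)⁻ p`. -/
noncomputable def tropObj (m n : ℕ) (a : Matrix (Fin m) (Fin n) EReal)
    (p : Fin m → EReal) (q x : Fin n → ℝ) : EReal :=
  (⨆ j, ((x j - q j : ℝ) : EReal)) +
    ⨆ i, (p i - ⨆ j, (a i j + ((x j : ℝ) : EReal)))

/-- The minimum value `Δ = (A q)⁻ p`. -/
noncomputable def tropDelta (m n : ℕ) (a : Matrix (Fin m) (Fin n) EReal)
    (p : Fin m → EReal) (q : Fin n → ℝ) : EReal :=
  ⨆ i, (p i - ⨆ j, (a i j + ((q j : ℝ) : EReal)))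

/-! With `c = max_j (x_j - q_j)` we have `x ≤ q + c` componentwise, hence `A x ≤ A q + c` row by
row, and subtracting from `p` gives `p_i - (A q)_i ≤ c + (p_i - (A x)_i)` for every `i`. -/

namespace EReal

lemma sub_le_coe_add_sub {p b b' : EReal} {c : ℝ} (h : b' ≤ c + b) : p - b ≤ c + (p - b') :=
  calc p - b = c + p - (c + b) := by
        rw [add_sub_add_comm (.inl (coe_ne_bot c)) (.inl (coe_ne_top c)), ← coe_sub,
          _root_.sub_self, coe_zero, zero_add]
    _ ≤ c + p - b' := sub_le_sub le_rfl h
    _ = c + (p - b') := add_sub_assoc _ _ _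

end EReal

section

variable {κ : Type*}

lemma iSup_add_coe_le_coe_add_iSup (a : κ → EReal) (x y : κ → ℝ) (c : ℝ)
    (h : ∀ j, x j ≤ c + y j) : ⨆ j, (a j + x j) ≤ c + ⨆ j, (a j + y j) :=
  iSup_le fun j => calc
    a j + x j ≤ a j + ((c + y j : ℝ) : EReal) := by gcongr; exact_mod_cast h j
    _ = c + (a j + y j) := by rw [EReal.coe_add]; ac_rfl
    _ ≤ c + ⨆ j, (a j + y j) := by gcongr; exact le_iSup (fun j => a j + (y j : EReal)) j

lemma sub_iSup_add_le [Finite κ] [Nonempty κ] (p : EReal) (a : κ → EReal) (q x : κ → ℝ) :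
    p - ⨆ j, (a j + q j) ≤ (⨆ j, ((x j - q j : ℝ) : EReal)) + (p - ⨆ j, (a j + x j)) := by
  obtain ⟨k, hk⟩ := Finite.exists_max fun j => x j - q j
  calc p - ⨆ j, (a j + q j)
      ≤ ((x k - q k : ℝ) : EReal) + (p - ⨆ j, (a j + x j)) :=
        EReal.sub_le_coe_add_sub <| iSup_add_coe_le_coe_add_iSup a x q _ fun j => by
          linarith [hk j]
    _ ≤ _ := by gcongr; exact le_iSup (fun j => ((x j - q j : ℝ) : EReal)) k

end

theorem tropObj_lower_bound_general (m n : ℕ) (a : Matrix (Fin m) (Fin n) EReal)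
    (harow : ∀ i, ∃ j, a i j ≠ ⊥)
    (p : Fin m → EReal)
    (q : Fin n → ℝ) (x : Fin n → ℝ) :
    tropDelta m n a p q ≤ tropObj m n a p q x := by
  refine iSup_le fun i => ?_
  have : Nonempty (Fin n) := ⟨(harow i).choose⟩
  calc p i - ⨆ j, (a i j + q j)
      ≤ (⨆ j, ((x j - q j : ℝ) : EReal)) + (p i - ⨆ j, (a i j + x j)) :=
        sub_iSup_add_le (p i) (a i) q x
    _ ≤ tropObj m n a p q x :=
        add_le_add_right (le_iSup (fun i => p i - ⨆ j, (a i j + ((x j : ℝ) : EReal))) i) _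

/-- Lower bound: for row-regular `A`, nonzero `p` and regular `q`, the objective
`q⁻ x (A x)⁻ p` is at least `Δ = (A q)⁻ p` for every regular vector `x`. -/
theorem tropObj_lower_bound (m n : ℕ) (a : Matrix (Fin m) (Fin n) EReal)
    (hatop : ∀ i j, a i j ≠ ⊤) (harow : ∀ i, ∃ j, a i j ≠ ⊥)
    (p : Fin m → EReal) (hptop : ∀ i, p i ≠ ⊤) (hp : ∃ i, p i ≠ ⊥)
    (q : Fin n → ℝ) (x : Fin n → ℝ) :
    tropDelta m n a p q ≤ tropObj m n a p q x :=
  tropObj_lower_bound_general m n a harow p q x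
end

section
/- Let A be an m×n matrix over ℝ ∪ {-∞} with each row containing at least one finite entry, p ∈ (ℝ ∪ {-∞})^m with at least one finite entry, and q ∈ ℝ^n all finite. Then the vector x = q achieves the value Δ = max_i (p_i - max_j (a_{ij} + q_j)) for the objective function f(x) = max_j(x_j - q_j) + max_i(p_i - max_j(a_{ij} + x_j)); consequently Δ is the minimum value of f over all x ∈ ℝ^n. -/
/-! With `c = maxⱼ (xⱼ - qⱼ)` one has `xⱼ ≤ qⱼ + c`, hence `maxⱼ (aᵢⱼ + xⱼ) ≤ maxⱼ (aᵢⱼ + qⱼ) + c`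
for every row, so every term of `Δ` is at most `c + (pᵢ - maxⱼ (aᵢⱼ + xⱼ))`, i.e. `Δ ≤ f(x)`.
At `x = q` the first factor of `f` is `0`. -/

theorem EReal.sub_le_coe_add_sub_s6 {p s t : EReal} {c : ℝ} (h : t ≤ s + c) :
    p - s ≤ c + (p - t) :=
  calc p - s ≤ p - (t - c) := EReal.sub_le_sub le_rfl (EReal.sub_le_of_le_add h)
    _ = c + (p - t) := by
      rw [sub_eq_add_neg p (t - c), EReal.neg_sub (.inr (by simp)) (.inr (by simp)),
        sub_eq_add_neg]
      ac_rfl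

theorem EReal.iSup_add_coe_le_iSup_add_coe_add {ι : Type*} (a : ι → EReal) {x y : ι → ℝ}
    {c : ℝ} (h : ∀ j, x j ≤ y j + c) :
    ⨆ j, (a j + ((x j : ℝ) : EReal)) ≤ (⨆ j, (a j + ((y j : ℝ) : EReal))) + c :=
  iSup_le fun j => calc
    a j + x j ≤ a j + y j + c := by
      rw [add_assoc, ← EReal.coe_add]
      gcongr
      exact h j
    _ ≤ _ := by
      gcongr
      exact le_iSup (fun j => a j + ((y j : ℝ) : EReal)) j

section

variable {m n : ℕ} (a : Matrix (Fin m) (Fin n) EReal) (p : Fin m → EReal) (q : Fin n → ℝ)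

theorem tropObj_self [Nonempty (Fin n)] : tropObj m n a p q q = tropDelta m n a p q := by
  simp only [tropObj, tropDelta, sub_self, EReal.coe_zero, iSup_const, zero_add]

theorem tropDelta_le_tropObj [Nonempty (Fin n)] (x : Fin n → ℝ) :
    tropDelta m n a p q ≤ tropObj m n a p q x := by
  obtain ⟨k, hk⟩ := Finite.exists_max fun j => x j - q j
  have hx : ∀ j, x j ≤ q j + (x k - q k) := fun j => by linarith [hk j]
  calc tropDelta m n a p q
      ≤ ((x k - q k : ℝ) : EReal) + ⨆ i, (p i - ⨆ j, (a i j + ((x j : ℝ) : EReal))) :=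
        iSup_le fun i =>
          (EReal.sub_le_coe_add_sub_s6 (EReal.iSup_add_coe_le_iSup_add_coe_add (a i) hx)).trans
            (add_le_add le_rfl
              (le_iSup (fun i => p i - ⨆ j, (a i j + ((x j : ℝ) : EReal))) i))
    _ ≤ tropObj m n a p q x :=
        add_le_add (le_iSup (fun j => ((x j - q j : ℝ) : EReal)) k) le_rfl

theorem tropObj_of_isEmpty [IsEmpty (Fin m)] (x : Fin n → ℝ) :
    tropObj m n a p q x = tropDelta m n a p q := by
  simp [tropObj, tropDelta]

end

theorem tropObj_min_attained_general (m n : ℕ) (a : Matrix (Fin m) (Fin n) EReal)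
    (harow : ∀ i, ∃ j, a i j ≠ ⊥)
    (p : Fin m → EReal)
    (q : Fin n → ℝ) :
    tropObj m n a p q q = tropDelta m n a p q ∧
      ∀ x : Fin n → ℝ, tropDelta m n a p q ≤ tropObj m n a p q x := by
  rcases isEmpty_or_nonempty (Fin m) with _ | ⟨⟨i⟩⟩
  · exact ⟨tropObj_of_isEmpty a p q q, fun x => (tropObj_of_isEmpty a p q x).ge⟩
  · have : Nonempty (Fin n) := ⟨(harow i).choose⟩
    exact ⟨tropObj_self a p q, tropDelta_le_tropObj a p q⟩

/-- The vector `x = q` attains the value `Δ`, and hence `Δ` is the minimum of the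
objective over all regular vectors. -/
theorem tropObj_min_attained (m n : ℕ) (a : Matrix (Fin m) (Fin n) EReal)
    (hatop : ∀ i j, a i j ≠ ⊤) (harow : ∀ i, ∃ j, a i j ≠ ⊥)
    (p : Fin m → EReal) (hptop : ∀ i, p i ≠ ⊤) (hp : ∃ i, p i ≠ ⊥)
    (q : Fin n → ℝ) :
    tropObj m n a p q q = tropDelta m n a p q ∧
      ∀ x : Fin n → ℝ, tropDelta m n a p q ≤ tropObj m n a p q x :=
  tropObj_min_attained_general m n a harow p q
end

section
/- Let A be a row-regular sparsified n-column matrix, p nonzero, q all finite, Δ as above. Suppose x ∈ ℝ^n satisfies the system max_j(x_j - q_j) = α and max_j(a_{ij} + x_j) ≥ α - Δ + p_i for all i, for some α ∈ ℝ. Then there exists a matrix A₁ obtained from A by keeping exactly one finite entry in each row (setting all other entries to -∞) such that α - Δ + (A₁⁻ p)_j ≤ x_j ≤ α + q_j for all j. -/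
/-!
Select in row `i` a column `σ i` attaining `max_j (a i j + x j)`. Since the row has a finite
entry and `x` is real, the selected entry is finite. For `σ i = j` the constraint of row `i`
reads `α - Δ + p i ≤ a i j + x j`, i.e. `α - Δ + (p i - a i j) ≤ x j`; taking the maximum over
the rows selecting `j` gives the lower bound.
-/

namespace EReal

theorem add_sub_le_of_add_le_add {c p a y : EReal} (h : c + p ≤ a + y) : c + (p - a) ≤ y := by
  rw [← add_sub_assoc]
  exact sub_le_of_le_add' h

theorem add_iSup_le_of_finite {ι : Type*} [Finite ι] {c b : EReal} {f : ι → EReal}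
    (h : ∀ i, c + f i ≤ b) : c + ⨆ i, f i ≤ b := by
  cases isEmpty_or_nonempty ι
  · simp
  · obtain ⟨i, hi⟩ := exists_eq_ciSup_of_finite (f := f)
    exact hi ▸ h i

theorem ne_bot_of_add_coe_eq_iSup {ι : Type*} {a : ι → EReal} {x : ι → ℝ} {j k : ι}
    (hk : a k + x k = ⨆ l, (a l + x l)) (hj : a j ≠ ⊥) : a k ≠ ⊥ := by
  intro hbot
  have hle : a j + x j ≤ a k + x k := hk ▸ le_iSup (fun l => a l + x l) j
  rw [hbot, bot_add, le_bot_iff, add_eq_bot_iff] at hle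
  exact hle.elim hj (coe_ne_bot _)

end EReal

open Classical in
theorem trop_minimizer_in_box_general (m n : ℕ) (a : Matrix (Fin m) (Fin n) EReal)
    (harow : ∀ i, ∃ j, a i j ≠ ⊥)
    (p : Fin m → EReal)
    (q : Fin n → ℝ)
    (x : Fin n → ℝ) (α : ℝ)
    (hq : (⨆ j, ((x j - q j : ℝ) : EReal)) = (α : EReal))
    (hA : ∀ i, (α : EReal) - tropDelta m n a p q + p i ≤
      ⨆ j, (a i j + ((x j : ℝ) : EReal))) :
    ∃ σ : Fin m → Fin n, (∀ i, a i (σ i) ≠ ⊥) ∧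
      ∀ j, (α : EReal) - tropDelta m n a p q +
          (⨆ i, if σ i = j then p i - a i j else (⊥ : EReal)) ≤ ((x j : ℝ) : EReal) ∧
        ((x j : ℝ) : EReal) ≤ (α : EReal) + ((q j : ℝ) : EReal) := by
  have hargmax : ∀ i, ∃ k, a i k + x k = ⨆ j, (a i j + ((x j : ℝ) : EReal)) := fun i =>
    have : Nonempty (Fin n) := ⟨(harow i).choose⟩
    exists_eq_ciSup_of_finite
  choose σ hσ using hargmax
  refine ⟨σ, fun i => EReal.ne_bot_of_add_coe_eq_iSup (hσ i) (harow i).choose_spec,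
    fun j => ⟨EReal.add_iSup_le_of_finite fun i => ?_, ?_⟩⟩
  · split_ifs with hij
    · subst hij
      exact EReal.add_sub_le_of_add_le_add ((hσ i).symm ▸ hA i)
    · simp
  · have hle : ((x j - q j : ℝ) : EReal) ≤ α := hq ▸ le_iSup (fun j => ((x j - q j : ℝ) : EReal)) j
    rw [EReal.coe_le_coe_iff] at hle
    rw [← EReal.coe_add, EReal.coe_le_coe_iff]
    linarith

open Classical in
/-- Every solution of the system `q⁻ x = α`, `A x ≥ α Δ⁻¹ p` lies in a box
`α Δ⁻¹ A₁⁻ p ≤ x ≤ α q` for some matrix `A₁` obtained from the sparsified `A` by keeping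
exactly one finite entry per row (encoded by a selection function `σ`). -/
theorem trop_minimizer_in_box (m n : ℕ) (a : Matrix (Fin m) (Fin n) EReal)
    (hatop : ∀ i j, a i j ≠ ⊤) (harow : ∀ i, ∃ j, a i j ≠ ⊥)
    (p : Fin m → EReal) (hptop : ∀ i, p i ≠ ⊤) (hp : ∃ i, p i ≠ ⊥)
    (q : Fin n → ℝ)
    (hsparse : ∀ i j, a i j ≠ ⊥ → p i - tropDelta m n a p q - ((q j : ℝ) : EReal) ≤ a i j)
    (x : Fin n → ℝ) (α : ℝ)
    (hq : (⨆ j, ((x j - q j : ℝ) : EReal)) = (α : EReal))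
    (hA : ∀ i, (α : EReal) - tropDelta m n a p q + p i ≤
      ⨆ j, (a i j + ((x j : ℝ) : EReal))) :
    ∃ σ : Fin m → Fin n, (∀ i, a i (σ i) ≠ ⊥) ∧
      ∀ j, (α : EReal) - tropDelta m n a p q +
          (⨆ i, if σ i = j then p i - a i j else (⊥ : EReal)) ≤ ((x j : ℝ) : EReal) ∧
        ((x j : ℝ) : EReal) ≤ (α : EReal) + ((q j : ℝ) : EReal) :=
  trop_minimizer_in_box_general m n a harow p q x α hq hA
end

section
/- Let A be a row-regular sparsified matrix, p nonzero, q all finite, Δ = max_i(p_i - max_j(a_{ij}+q_j)), and let A₁ be obtained from A by keeping one finite entry per row and setting the other entries to -∞. If x ∈ ℝ^n satisfies α - Δ + (A₁⁻p)_j ≤ x_j ≤ α + q_j for all j for some α ∈ ℝ, then x achieves the minimum: max_j(x_j - q_j) = α and max_j(a_{ij} + x_j) ≥ α - Δ + p_i for all i, hence f(x) = Δ. -/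
namespace EReal

lemma add_sub_coe_le_iff {b x y : EReal} {c : ℝ} : b + (x - c) ≤ y ↔ b + x ≤ y + c := by
  rw [← add_sub_assoc, sub_le_iff_le_add (.inl (coe_ne_bot c)) (.inl (coe_ne_top c))]

lemma sub_le_neg_of_coe_add_le {x z : EReal} {b : ℝ} (h : b + x ≤ z) : x - z ≤ (-b : ℝ) :=
  sub_le_of_le_add <| calc
    x = (-b : ℝ) + (b + x) := by rw [← add_assoc, ← coe_add, neg_add_cancel, coe_zero, zero_add]
    _ ≤ (-b : ℝ) + z := add_le_add_right h _

end EReal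

noncomputable def tropMulVec {ι κ : Type*} (a : Matrix ι κ EReal) (v : κ → ℝ) (i : ι) : EReal :=
  ⨆ j, a i j + (v j : EReal)

section tropMulVec

variable {ι κ : Type*} (a : Matrix ι κ EReal) (v : κ → ℝ) (i : ι)

lemma le_tropMulVec (j : κ) : a i j + v j ≤ tropMulVec a v i :=
  le_iSup (fun j ↦ a i j + (v j : EReal)) j

lemma tropMulVec_ne_bot {j : κ} (h : a i j ≠ ⊥) : tropMulVec a v i ≠ ⊥ :=
  ne_bot_of_le_ne_bot (EReal.add_ne_bot_iff.2 ⟨h, EReal.coe_ne_bot _⟩) (le_tropMulVec a v i j)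

lemma tropMulVec_ne_top [Finite κ] (h : ∀ j, a i j ≠ ⊤) : tropMulVec a v i ≠ ⊤ :=
  iSup_ne_top fun j ↦ EReal.add_ne_top (h j) (EReal.coe_ne_top _)

lemma tropMulVec_le_add {w : κ → ℝ} {t : ℝ} (h : ∀ j, v j ≤ t + w j) :
    tropMulVec a v i ≤ tropMulVec a w i + t :=
  iSup_le fun j ↦ calc
    a i j + v j ≤ a i j + (w j + t : ℝ) := by gcongr; linarith [h j]
    _ ≤ tropMulVec a w i + t := by
      rw [EReal.coe_add, ← add_assoc]; gcongr; exact le_tropMulVec a w i j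

end tropMulVec

/-- `(A₁⁻ p)_j`, where `A₁` keeps only the entry `a i (σ i)` of each row `i`. -/
noncomputable def selectionResidual {ι κ : Type*} [DecidableEq κ] (σ : ι → κ)
    (a : Matrix ι κ EReal) (p : ι → EReal) (j : κ) : EReal :=
  ⨆ i, if σ i = j then p i - a i j else ⊥

lemma sub_le_selectionResidual {ι κ : Type*} [DecidableEq κ] (σ : ι → κ)
    (a : Matrix ι κ EReal) (p : ι → EReal) (i : ι) :
    p i - a i (σ i) ≤ selectionResidual σ a p (σ i) :=
  le_iSup_of_le i (if_pos rfl).ge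

section rows

variable {ι κ : Type*} (a : Matrix ι κ EReal) {p : ι → EReal} {i : ι}

lemma add_le_add_of_add_selectionResidual_le [DecidableEq κ] {σ : ι → κ} {β y : EReal}
    (htop : a i (σ i) ≠ ⊤) (hbot : a i (σ i) ≠ ⊥) (h : β + selectionResidual σ a p (σ i) ≤ y) :
    β + p i ≤ a i (σ i) + y := by
  lift a i (σ i) to ℝ using ⟨htop, hbot⟩ with c hc
  rw [add_comm (c : EReal), ← EReal.add_sub_coe_le_iff, hc]
  exact (add_le_add_right (sub_le_selectionResidual σ a p i) _).trans h

/-- The key inequality is `a i j + q j ≤ (A q)_i = s` (that is, `q⁻ A₁⁻ ≥ (A q)⁻`). -/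
lemma le_sub_of_coe_sub_add_le {x q : κ → ℝ} {j : κ} {α ρ s : ℝ} (htop : a i j ≠ ⊤)
    (hbot : a i j ≠ ⊥) (hρ : p i = ρ) (hs : tropMulVec a q i = s)
    (h : ((α - (ρ - s) : ℝ) : EReal) + p i ≤ a i j + x j) : α ≤ x j - q j := by
  have hcq := le_tropMulVec a q i j
  lift a i j to ℝ using ⟨htop, hbot⟩ with c
  rw [hs] at hcq
  rw [hρ] at h
  have : c + q j ≤ s := by exact_mod_cast hcq
  have : α - (ρ - s) + ρ ≤ c + x j := by exact_mod_cast h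
  linarith

end rows

section tropDelta

variable {m n : ℕ} (a : Matrix (Fin m) (Fin n) EReal) (p : Fin m → EReal) (q : Fin n → ℝ)

lemma tropDelta_eq : tropDelta m n a p q = ⨆ i, (p i - tropMulVec a q i) := rfl

lemma tropDelta_ne_bot (hatop : ∀ i j, a i j ≠ ⊤) {i : Fin m} (hi : p i ≠ ⊥) :
    tropDelta m n a p q ≠ ⊥ := by
  rw [tropDelta_eq]
  refine ne_bot_of_le_ne_bot ?_ (le_iSup (fun i ↦ p i - tropMulVec a q i) i)
  rw [sub_eq_add_neg, EReal.add_ne_bot_iff]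
  exact ⟨hi, fun h ↦ tropMulVec_ne_top a q i (hatop i) (EReal.neg_eq_bot_iff.1 h)⟩

lemma exists_tropDelta_eq_coe_sub (hatop : ∀ i j, a i j ≠ ⊤) (harow : ∀ i, ∃ j, a i j ≠ ⊥)
    (hptop : ∀ i, p i ≠ ⊤) (hp : ∃ i, p i ≠ ⊥) :
    ∃ i, ∃ ρ s : ℝ, p i = ρ ∧ tropMulVec a q i = s ∧ tropDelta m n a p q = (ρ - s : ℝ) := by
  obtain ⟨i₀, hi₀⟩ := hp
  have : Nonempty (Fin m) := ⟨i₀⟩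
  obtain ⟨i, hi⟩ := exists_eq_ciSup_of_finite (f := fun i ↦ p i - tropMulVec a q i)
  rw [← tropDelta_eq] at hi
  obtain ⟨j, hj⟩ := harow i
  lift tropMulVec a q i to ℝ using ⟨tropMulVec_ne_top a q i (hatop i), tropMulVec_ne_bot a q i hj⟩
    with s hs
  have hpi : p i ≠ ⊥ := fun h ↦ tropDelta_ne_bot a p q hatop hi₀ (by rw [← hi, h, EReal.bot_sub])
  lift p i to ℝ using ⟨hptop i, hpi⟩ with ρ hρ
  exact ⟨i, ρ, s, hρ.symm, hs.symm, by rw [← hi, EReal.coe_sub]⟩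

end tropDelta

open Classical in
theorem trop_box_gives_minimizer_general (m n : ℕ) (a : Matrix (Fin m) (Fin n) EReal)
    (hatop : ∀ i j, a i j ≠ ⊤) (harow : ∀ i, ∃ j, a i j ≠ ⊥)
    (p : Fin m → EReal) (hptop : ∀ i, p i ≠ ⊤) (hp : ∃ i, p i ≠ ⊥)
    (q : Fin n → ℝ)
    (σ : Fin m → Fin n) (hσ : ∀ i, a i (σ i) ≠ ⊥)
    (x : Fin n → ℝ) (α : ℝ)
    (hbox : ∀ j, (α : EReal) - tropDelta m n a p q +
          (⨆ i, if σ i = j then p i - a i j else (⊥ : EReal)) ≤ ((x j : ℝ) : EReal) ∧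
        ((x j : ℝ) : EReal) ≤ (α : EReal) + ((q j : ℝ) : EReal)) :
    (⨆ j, ((x j - q j : ℝ) : EReal)) = (α : EReal) ∧
      (∀ i, (α : EReal) - tropDelta m n a p q + p i ≤
        ⨆ j, (a i j + ((x j : ℝ) : EReal))) ∧
      tropObj m n a p q x = tropDelta m n a p q := by
  obtain ⟨i₁, ρ, s, hρ, hs, hΔ⟩ := exists_tropDelta_eq_coe_sub a p q hatop harow hptop hp
  rw [hΔ, ← EReal.coe_sub] at hbox ⊢
  have hxq (j : Fin n) : x j ≤ α + q j := by exact_mod_cast (hbox j).2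
  have hrow (i : Fin m) : (α - (ρ - s) : ℝ) + p i ≤ a i (σ i) + x (σ i) :=
    add_le_add_of_add_selectionResidual_le a (hatop i (σ i)) (hσ i) (hbox (σ i)).1
  have hmax : (⨆ j, ((x j - q j : ℝ) : EReal)) = α :=
    le_antisymm (iSup_le fun j ↦ EReal.coe_le_coe (by linarith [hxq j]))
      (le_iSup_of_le (σ i₁) (EReal.coe_le_coe
        (le_sub_of_coe_sub_add_le a (hatop _ _) (hσ i₁) hρ hs (hrow i₁))))
  have hAx (i : Fin m) : (α - (ρ - s) : ℝ) + p i ≤ tropMulVec a x i :=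
    (hrow i).trans (le_tropMulVec a x i (σ i))
  have hres : (⨆ i, (p i - tropMulVec a x i)) = (ρ - s - α : ℝ) := by
    refine le_antisymm (iSup_le fun i ↦ ?_) (le_iSup_of_le i₁ ?_)
    · rw [← neg_sub]
      exact EReal.sub_le_neg_of_coe_add_le (hAx i)
    · rw [sub_sub, EReal.coe_sub, EReal.coe_add, ← hρ, ← hs]
      exact EReal.sub_le_sub le_rfl (tropMulVec_le_add a x i₁ hxq)
  refine ⟨hmax, hAx, ?_⟩
  rw [tropObj, hmax]
  change (α : EReal) + ⨆ i, (p i - tropMulVec a x i) = _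
  rw [hres, ← EReal.coe_add, add_sub_cancel]

open Classical in
/-- Converse direction of the complete-solution theorem: if `A₁` is obtained from the
row-regular sparsified matrix `A` by keeping one finite entry per row (encoded by the
selection `σ`), then every `x` in the box `α Δ⁻¹ A₁⁻ p ≤ x ≤ α q` solves the system
`q⁻ x = α`, `A x ≥ α Δ⁻¹ p`, and hence attains the minimum `Δ`. -/
theorem trop_box_gives_minimizer (m n : ℕ) (a : Matrix (Fin m) (Fin n) EReal)
    (hatop : ∀ i j, a i j ≠ ⊤) (harow : ∀ i, ∃ j, a i j ≠ ⊥)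
    (p : Fin m → EReal) (hptop : ∀ i, p i ≠ ⊤) (hp : ∃ i, p i ≠ ⊥)
    (q : Fin n → ℝ)
    (hsparse : ∀ i j, a i j ≠ ⊥ → p i - tropDelta m n a p q - ((q j : ℝ) : EReal) ≤ a i j)
    (σ : Fin m → Fin n) (hσ : ∀ i, a i (σ i) ≠ ⊥)
    (x : Fin n → ℝ) (α : ℝ)
    (hbox : ∀ j, (α : EReal) - tropDelta m n a p q +
          (⨆ i, if σ i = j then p i - a i j else (⊥ : EReal)) ≤ ((x j : ℝ) : EReal) ∧
        ((x j : ℝ) : EReal) ≤ (α : EReal) + ((q j : ℝ) : EReal)) :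
    (⨆ j, ((x j - q j : ℝ) : EReal)) = (α : EReal) ∧
      (∀ i, (α : EReal) - tropDelta m n a p q + p i ≤
        ⨆ j, (a i j + ((x j : ℝ) : EReal))) ∧
      tropObj m n a p q x = tropDelta m n a p q :=
  trop_box_gives_minimizer_general m n a hatop harow p hptop hp q σ hσ x α hbox
end
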